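/- arXiv:1309.0972 — 5 statements merged into one kernel-verified Lean document; each statement's English description precedes it below -/
import Mathlib

section
/- Let X be compact, X_1,...,X_N closed subsets, f_i : X_i → X continuous, K_0 = X and K_n = ∪_i f_i(K_{n-1} ∩ X_i) (with the convention f_i(∅) = ∅). Then the sequence (K_n) is a decreasing nested sequence of compact sets, and if each K_n is nonempty, the intersection K = ∩_{n∈ℕ} K_n is nonempty and satisfies K = ∪_{i=1}^N f_i(K ∩ X_i), i.e., K is a local attractor of the local IFS. -/
/-! The iterates `Kₙ` decrease because `F_loc` is monotone and `K₁ ⊆ K₀ = X`, and they are compact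
because `F_loc` maps compact sets to compact sets. Nonemptiness of `K = ⋂ₙ Kₙ` is Cantor's
intersection theorem. For `F_loc K = K`, the key point is that `F_loc` commutes with decreasing
intersections of compact sets: a continuous image commutes with such an intersection (a point in
every `f(Kₙ)` has a nonempty compact fibre in every `Kₙ`, and these fibres are nested), and a
finite union commutes with decreasing intersections. -/

open Set

def localHutchinson {X ι : Type*} (Xs : ι → Set X) (f : ι → X → X) (S : Set X) : Set X :=
  ⋃ i, f i '' (S ∩ Xs i)

theorem localHutchinson_mono {X ι : Type*} (Xs : ι → Set X) (f : ι → X → X) :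
    Monotone (localHutchinson Xs f) := fun _ _ hST =>
  iUnion_mono fun _ => image_mono (inter_subset_inter_left _ hST)

theorem ContinuousOn.image_iInter_of_antitone {X Y : Type*} [TopologicalSpace X] [T2Space X]
    [TopologicalSpace Y] [T1Space Y] {g : X → Y} {S : ℕ → Set X} (hS : Antitone S)
    (hS_cpt : ∀ n, IsCompact (S n)) (hg : ContinuousOn g (S 0)) :
    g '' ⋂ n, S n = ⋂ n, g '' S n := by
  refine (image_iInter_subset S g).antisymm fun y hy => ?_
  have hfibre_ne : ∀ n, (S n ∩ g ⁻¹' {y}).Nonempty := fun n => by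
    obtain ⟨x, hx, rfl⟩ := mem_iInter.1 hy n
    exact ⟨x, hx, rfl⟩
  have hfibre_closed : ∀ n, IsClosed (S n ∩ g ⁻¹' {y}) := fun n =>
    (hg.mono (hS (Nat.zero_le n))).preimage_isClosed_of_isClosed (hS_cpt n).isClosed
      isClosed_singleton
  obtain ⟨x, hx⟩ := IsCompact.nonempty_iInter_of_sequence_nonempty_isCompact_isClosed _
    (fun n => inter_subset_inter_left _ (hS n.le_succ)) hfibre_ne
    ((hS_cpt 0).of_isClosed_subset (hfibre_closed 0) inter_subset_left) hfibre_closed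
  rw [← iInter_inter] at hx
  exact ⟨x, hx.1, hx.2⟩

section Compact

variable {X ι : Type*} [TopologicalSpace X] [Finite ι] {Xs : ι → Set X} {f : ι → X → X}

theorem IsCompact.localHutchinson (hXs : ∀ i, IsClosed (Xs i))
    (hf : ∀ i, ContinuousOn (f i) (Xs i)) {S : Set X} (hS : IsCompact S) :
    IsCompact (localHutchinson Xs f S) :=
  isCompact_iUnion fun i =>
    (hS.inter_right (hXs i)).image_of_continuousOn ((hf i).mono inter_subset_right)

theorem localHutchinson_iInter_of_antitone [T2Space X] (hXs : ∀ i, IsClosed (Xs i))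
    (hf : ∀ i, ContinuousOn (f i) (Xs i)) {S : ℕ → Set X} (hS : Antitone S)
    (hS_cpt : ∀ n, IsCompact (S n)) :
    localHutchinson Xs f (⋂ n, S n) = ⋂ n, localHutchinson Xs f (S n) := by
  have hpiece : ∀ i, f i '' ((⋂ n, S n) ∩ Xs i) = ⋂ n, f i '' (S n ∩ Xs i) := fun i => by
    rw [iInter_inter]
    exact ((hf i).mono inter_subset_right).image_iInter_of_antitone
      (fun m n hmn => inter_subset_inter_left _ (hS hmn))
      (fun n => (hS_cpt n).inter_right (hXs i))
  simp only [localHutchinson, hpiece]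
  exact (iInter_iUnion_of_antitone (s := fun i n => f i '' (S n ∩ Xs i)) fun i m n hmn =>
    image_mono (inter_subset_inter_left _ (hS hmn))).symm

end Compact

theorem local_attractor_as_intersection_general {X : Type*} [MetricSpace X] [CompactSpace X]
    (N : ℕ) (Xs : Fin N → Set X) (hXs : ∀ i, IsClosed (Xs i))
    (f : Fin N → X → X) (hf : ∀ i, ContinuousOn (f i) (Xs i))
    (K : ℕ → Set X) (hK0 : K 0 = Set.univ)
    (hK : ∀ n, K (n + 1) = ⋃ i, f i '' (K n ∩ Xs i)) :
    (∀ n, IsCompact (K n)) ∧ (∀ m n, m ≤ n → K n ⊆ K m) ∧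
      ((∀ n, (K n).Nonempty) →
        (⋂ n, K n).Nonempty ∧ (⋂ n, K n) = ⋃ i, f i '' ((⋂ n, K n) ∩ Xs i)) := by
  change ∀ n, K (n + 1) = localHutchinson Xs f (K n) at hK
  have hcpt : ∀ n, IsCompact (K n) := fun n => by
    induction n with
    | zero => exact hK0 ▸ isCompact_univ
    | succ n ih => exact hK n ▸ ih.localHutchinson hXs hf
  have hstep : ∀ n, K (n + 1) ⊆ K n := fun n => by
    induction n with
    | zero => exact hK0 ▸ subset_univ _
    | succ n ih =>
      calc K (n + 2) = localHutchinson Xs f (K (n + 1)) := hK (n + 1)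
        _ ⊆ localHutchinson Xs f (K n) := localHutchinson_mono Xs f ih
        _ = K (n + 1) := (hK n).symm
  have hanti : Antitone K := antitone_nat_of_succ_le hstep
  refine ⟨hcpt, fun m n hmn => hanti hmn, fun hne => ⟨?_, ?_⟩⟩
  · exact IsCompact.nonempty_iInter_of_sequence_nonempty_isCompact_isClosed K hstep hne
      (hcpt 0) fun n => (hcpt n).isClosed
  · calc ⋂ n, K n = ⋂ n, K (n + 1) := (hanti.iInter_nat_add 1).symm
      _ = ⋂ n, localHutchinson Xs f (K n) := by simp only [hK]
      _ = localHutchinson Xs f (⋂ n, K n) :=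
        (localHutchinson_iInter_of_antitone hXs hf hanti hcpt).symm

/-- For a contractive local IFS on a compact space, the iterates `K₀ = X`,
`Kₙ = ⋃ i, fᵢ(Kₙ₋₁ ∩ Xᵢ)` form a decreasing nested sequence of compact sets, and if each
`Kₙ` is nonempty then `K = ⋂ₙ Kₙ` is a nonempty local attractor:
`K = ⋃ i, fᵢ(K ∩ Xᵢ)`. -/
theorem local_attractor_as_intersection {X : Type*} [MetricSpace X] [CompactSpace X]
    (N : ℕ) (Xs : Fin N → Set X) (hXs : ∀ i, IsClosed (Xs i))
    (f : Fin N → X → X) (hf : ∀ i, ContinuousOn (f i) (Xs i))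
    (s : ℝ) (hs0 : 0 ≤ s) (hs1 : s < 1)
    (hcontr : ∀ i, ∀ x ∈ Xs i, ∀ y ∈ Xs i, dist (f i x) (f i y) ≤ s * dist x y)
    (K : ℕ → Set X) (hK0 : K 0 = Set.univ)
    (hK : ∀ n, K (n + 1) = ⋃ i, f i '' (K n ∩ Xs i)) :
    (∀ n, IsCompact (K n)) ∧ (∀ m n, m ≤ n → K n ⊆ K m) ∧
      ((∀ n, (K n).Nonempty) →
        (⋂ n, K n).Nonempty ∧ (⋂ n, K n) = ⋃ i, f i '' ((⋂ n, K n) ∩ Xs i)) :=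
  local_attractor_as_intersection_general N Xs hXs f hf K hK0 hK
end

section
/- Let Y be an F-space with a homogeneous translation-invariant metric d_Y, and v_i(x,y) = λ_i(x) + S_i(x)·y with λ_i ∈ B(X_i, Y) and S_i : X_i → ℝ bounded with ‖S_i‖_∞ < 1. Then v_i satisfies the uniform contractivity condition d_Y(v_i(x,y_1), v_i(x,y_2)) ≤ ‖S_i‖_∞ d_Y(y_1,y_2), and hence the associated RB operator Φ(λ)(S)f = Σ_i (λ_i∘u_i^{-1})χ_{u_i(X_i)} + Σ_i (S_i∘u_i^{-1})·(f∘u_i^{-1})χ_{u_i(X_i)} is contractive on B(X,Y) with factor max_i ‖S_i‖_∞; its unique fixed point f* satisfies f*∘u_i = λ_i + S_i·f*|_{X_i} on X_i for all i. -/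
/-!
Since `|Sᵢ| ≤ s`, each `vᵢ(x, ·)` is `s`-Lipschitz, and since every point of `X` is some `uᵢ(x)`
with `x ∈ Xᵢ`, the operator `Φ` is an `s`-contraction for the uniform distance; it maps bounded
functions to bounded ones because there are finitely many bounded `λᵢ`. Banach's fixed point
theorem in the complete space of bounded functions gives the unique fixed point, and the
self-referential equations are the defining equations of `Φ` read at `f = Φ f`.
-/

open Bornology Set BoundedContinuousFunction

theorem dist_add_smul_le {𝕜 Y : Type*} [NormedField 𝕜] [SeminormedAddCommGroup Y]
    [NormedSpace 𝕜 Y] {c : 𝕜} {s : ℝ} (hc : ‖c‖ ≤ s) (a y₁ y₂ : Y) :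
    dist (a + c • y₁) (a + c • y₂) ≤ s * dist y₁ y₂ := by
  rw [dist_add_left, dist_smul₀]
  exact mul_le_mul_of_nonneg_right hc dist_nonneg

theorem existsUnique_isBounded_fixed_of_uniform_dist_le {X Y : Type*} [MetricSpace Y]
    [CompleteSpace Y] [Nonempty Y] {s : ℝ} (hs : s < 1) (Φ : (X → Y) → X → Y)
    (hbdd : ∀ f, IsBounded (range f) → IsBounded (range (Φ f)))
    (hdist : ∀ f g : X → Y, ∀ C : ℝ, (∀ x, dist (f x) (g x) ≤ C) →
      ∀ x, dist (Φ f x) (Φ g x) ≤ s * C) :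
    ∃! f : X → Y, IsBounded (range f) ∧ Φ f = f := by
  -- With the discrete topology, bounded functions `X → Y` are the complete space `X →ᵇ Y`.
  let _ : TopologicalSpace X := ⊥
  have : DiscreteTopology X := ⟨rfl⟩
  let T : (X →ᵇ Y) → X →ᵇ Y := fun f => mkOfDiscrete (Φ f) _
    (Metric.isBounded_range_iff.1 (hbdd f f.isBounded_range)).choose_spec
  have hT : ContractingWith s.toNNReal T := by
    refine ⟨Real.toNNReal_lt_one.2 hs, LipschitzWith.of_dist_le_mul fun f g => ?_⟩
    refine (dist_le (by positivity)).2 fun x => ?_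
    calc dist (Φ f x) (Φ g x) ≤ s * dist f g := hdist f g _ (fun x => f.dist_coe_le_dist x) x
      _ ≤ s.toNNReal * dist f g := mul_le_mul_of_nonneg_right (Real.le_coe_toNNReal s) dist_nonneg
  have : Nonempty (X →ᵇ Y) := ⟨const X (Classical.arbitrary Y)⟩
  refine ⟨⇑(ContractingWith.fixedPoint T hT), ⟨isBounded_range _,
    congrArg DFunLike.coe (ContractingWith.fixedPoint_isFixedPt hT)⟩, ?_⟩
  rintro g ⟨hg, hΦg⟩
  let g' : X →ᵇ Y := mkOfDiscrete g _ (Metric.isBounded_range_iff.1 hg).choose_spec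
  have hg' : T g' = g' := ext fun x => congrFun hΦg x
  exact congrArg DFunLike.coe (ContractingWith.fixedPoint_unique hT hg')

section AffineRB

variable {X Y ι 𝕜 : Type*} [NormedField 𝕜] [SeminormedAddCommGroup Y] [NormedSpace 𝕜 Y]
  {Xs : ι → Set X} {u : ι → X → X} {lam : ι → X → Y} {S : ι → X → 𝕜} {s : ℝ}
  {Φ : (X → Y) → X → Y}

theorem dist_rbOperator_le (hcover : ∀ x, ∃ i, ∃ x' ∈ Xs i, u i x' = x)
    (hS : ∀ i, ∀ x ∈ Xs i, ‖S i x‖ ≤ s)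
    (hΦ : ∀ f : X → Y, ∀ i, ∀ x ∈ Xs i, Φ f (u i x) = lam i x + S i x • f x)
    {f g : X → Y} {C : ℝ} (hC : ∀ x, dist (f x) (g x) ≤ C) (x : X) :
    dist (Φ f x) (Φ g x) ≤ s * C := by
  obtain ⟨i, x', hx', rfl⟩ := hcover x
  rw [hΦ f i x' hx', hΦ g i x' hx']
  calc dist (lam i x' + S i x' • f x') (lam i x' + S i x' • g x') ≤ s * dist (f x') (g x') :=
        dist_add_smul_le (hS i x' hx') _ _ _
    _ ≤ s * C := mul_le_mul_of_nonneg_left (hC x') ((norm_nonneg _).trans (hS i x' hx'))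

theorem isBounded_range_rbOperator [Finite ι] (hcover : ∀ x, ∃ i, ∃ x' ∈ Xs i, u i x' = x)
    (hlam : ∀ i, IsBounded (lam i '' Xs i)) (hS : ∀ i, ∀ x ∈ Xs i, ‖S i x‖ ≤ s)
    (hΦ : ∀ f : X → Y, ∀ i, ∀ x ∈ Xs i, Φ f (u i x) = lam i x + S i x • f x)
    {f : X → Y} (hf : IsBounded (range f)) : IsBounded (range (Φ f)) := by
  obtain ⟨C, hC⟩ := isBounded_iff_forall_norm_le.1 (isBounded_iUnion.2 hlam)
  obtain ⟨D, hD⟩ := isBounded_iff_forall_norm_le.1 hf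
  refine isBounded_iff_forall_norm_le.2 ⟨C + s * D, ?_⟩
  rintro _ ⟨x, rfl⟩
  obtain ⟨i, x', hx', rfl⟩ := hcover x
  rw [hΦ f i x' hx']
  calc ‖lam i x' + S i x' • f x'‖ ≤ ‖lam i x'‖ + ‖S i x'‖ * ‖f x'‖ := by
        rw [← norm_smul]; exact norm_add_le _ _
    _ ≤ C + s * D := add_le_add (hC _ (mem_iUnion.2 ⟨i, mem_image_of_mem _ hx'⟩))
        (mul_le_mul (hS i x' hx') (hD _ (mem_range_self x')) (norm_nonneg _)
          ((norm_nonneg _).trans (hS i x' hx')))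

end AffineRB

theorem RB_operator_affine_contraction_general {X Y : Type*}
    [NormedAddCommGroup Y] [NormedSpace ℝ Y] [CompleteSpace Y]
    (N : ℕ) (Xs : Fin N → Set X) (u : Fin N → X → X)
    (hpart : ∀ x : X, ∃! p : Fin N × X, p.2 ∈ Xs p.1 ∧ u p.1 p.2 = x)
    (lam : Fin N → X → Y) (hlam : ∀ i, IsBounded (lam i '' Xs i))
    (S : Fin N → X → ℝ) (s : ℝ) (hs1 : s < 1)
    (hS : ∀ i, ∀ x ∈ Xs i, |S i x| ≤ s)
    (Φ : (X → Y) → X → Y)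
    (hΦ : ∀ f : X → Y, ∀ i, ∀ x ∈ Xs i, Φ f (u i x) = lam i x + S i x • f x) :
    (∀ i, ∀ x ∈ Xs i, ∀ y₁ y₂ : Y,
        dist (lam i x + S i x • y₁) (lam i x + S i x • y₂) ≤ s * dist y₁ y₂) ∧
      (∀ f g : X → Y, IsBounded (Set.range f) → IsBounded (Set.range g) →
        ∀ C : ℝ, (∀ x, dist (f x) (g x) ≤ C) → ∀ x, dist (Φ f x) (Φ g x) ≤ s * C) ∧
      (∃! f : X → Y, IsBounded (Set.range f) ∧ Φ f = f) ∧
      (∀ f : X → Y, IsBounded (Set.range f) → Φ f = f →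
        ∀ i, ∀ x ∈ Xs i, f (u i x) = lam i x + S i x • f x) := by
  have hcover (x : X) : ∃ i, ∃ x' ∈ Xs i, u i x' = x :=
    let ⟨⟨i, x'⟩, hx', _⟩ := hpart x; ⟨i, x', hx'⟩
  have hS' (i) (x) (hx : x ∈ Xs i) : ‖S i x‖ ≤ s := (Real.norm_eq_abs _).trans_le (hS i x hx)
  refine ⟨fun i x hx => dist_add_smul_le (hS' i x hx) _,
    fun f g _ _ C hC => dist_rbOperator_le hcover hS' hΦ hC,
    existsUnique_isBounded_fixed_of_uniform_dist_le hs1 Φ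
      (fun f => isBounded_range_rbOperator hcover hlam hS' hΦ)
      (fun f g C => dist_rbOperator_le hcover hS' hΦ), ?_⟩
  intro f _ hfix i x hx
  rw [← hfix, hΦ f i x hx, hfix]

/-- For `vᵢ(x,y) = λᵢ(x) + Sᵢ(x)·y` with `|Sᵢ| ≤ s < 1` on `Xᵢ`, the maps `vᵢ` are uniformly
contractive in the second variable with constant `s`, the associated RB operator is a
contraction with factor `s` on bounded functions, and its unique bounded fixed point `f*`
satisfies the self-referential equations `f*(uᵢ(x)) = λᵢ(x) + Sᵢ(x)·f*(x)` on `Xᵢ`. -/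
theorem RB_operator_affine_contraction {X Y : Type*} [Nonempty X]
    [NormedAddCommGroup Y] [NormedSpace ℝ Y] [CompleteSpace Y]
    (N : ℕ) (Xs : Fin N → Set X) (u : Fin N → X → X)
    (hpart : ∀ x : X, ∃! p : Fin N × X, p.2 ∈ Xs p.1 ∧ u p.1 p.2 = x)
    (lam : Fin N → X → Y) (hlam : ∀ i, IsBounded (lam i '' Xs i))
    (S : Fin N → X → ℝ) (s : ℝ) (hs1 : s < 1)
    (hS : ∀ i, ∀ x ∈ Xs i, |S i x| ≤ s)
    (Φ : (X → Y) → X → Y)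
    (hΦ : ∀ f : X → Y, ∀ i, ∀ x ∈ Xs i, Φ f (u i x) = lam i x + S i x • f x) :
    (∀ i, ∀ x ∈ Xs i, ∀ y₁ y₂ : Y,
        dist (lam i x + S i x • y₁) (lam i x + S i x • y₂) ≤ s * dist y₁ y₂) ∧
      (∀ f g : X → Y, IsBounded (Set.range f) → IsBounded (Set.range g) →
        ∀ C : ℝ, (∀ x, dist (f x) (g x) ≤ C) → ∀ x, dist (Φ f x) (Φ g x) ≤ s * C) ∧
      (∃! f : X → Y, IsBounded (Set.range f) ∧ Φ f = f) ∧
      (∀ f : X → Y, IsBounded (Set.range f) → Φ f = f →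
        ∀ i, ∀ x ∈ Xs i, f (u i x) = lam i x + S i x • f x) :=
  RB_operator_affine_contraction_general N Xs u hpart lam hlam S s hs1 hS Φ hΦ
end

section
/- With Y an F-space with homogeneous metric, X_i, u_i as in the partition setup, and fixed S = (S_1,...,S_N) with max_i ‖S_i‖_∞ < 1, the map λ = (λ_1,...,λ_N) ↦ f*(λ), sending the tuple of bounded functions λ_i ∈ B(X_i,Y) to the unique fixed point of the RB operator Φ(λ)(S), is a linear isomorphism (linear bijection) from the product ×_{i=1}^N B(X_i,Y) onto B(X,Y). -/
open Bornology BoundedContinuousFunction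

/-- The map `λ ↦ f*(λ)`, sending a tuple of bounded functions `λᵢ ∈ B(Xᵢ,Y)` to the unique
bounded fixed point of the RB operator with fixed `S`, is a linear bijection from
`×ᵢ B(Xᵢ,Y)` onto `B(X,Y)`: stated via the fixed-point relation
`FixPt lam f ↔ (f bounded ∧ ∀ i, ∀ x ∈ Xᵢ, f(uᵢ x) = lamᵢ x + Sᵢ x • f x)`,
it is well defined (existence and uniqueness), linear, injective and surjective. -/
theorem fractal_function_linear_isomorphism {X Y : Type*} [Nonempty X]
    [NormedAddCommGroup Y] [NormedSpace ℝ Y] [CompleteSpace Y]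
    (N : ℕ) (Xs : Fin N → Set X) (u : Fin N → X → X)
    (hpart : ∀ x : X, ∃! p : Fin N × X, p.2 ∈ Xs p.1 ∧ u p.1 p.2 = x)
    (S : Fin N → X → ℝ) (s : ℝ) (hs1 : s < 1)
    (hS : ∀ i, ∀ x ∈ Xs i, |S i x| ≤ s)
    (FixPt : (Fin N → X → Y) → (X → Y) → Prop)
    (hFixPt : ∀ lam f, FixPt lam f ↔
      (IsBounded (Set.range f) ∧ ∀ i, ∀ x ∈ Xs i, f (u i x) = lam i x + S i x • f x)) :
    -- well defined: existence and uniqueness of the fixed point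
    (∀ lam : Fin N → X → Y, (∀ i, IsBounded (lam i '' Xs i)) → ∃! f, FixPt lam f) ∧
    -- linearity of λ ↦ f*(λ)
    (∀ (a b : ℝ) (lam mu : Fin N → X → Y) (f g : X → Y), FixPt lam f → FixPt mu g →
      FixPt (fun i x => a • lam i x + b • mu i x) (fun x => a • f x + b • g x)) ∧
    -- injectivity (as functions on the pieces Xᵢ)
    (∀ (lam mu : Fin N → X → Y) (f : X → Y), FixPt lam f → FixPt mu f →
      ∀ i, ∀ x ∈ Xs i, lam i x = mu i x) ∧
    -- surjectivity onto B(X,Y)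
    (∀ f : X → Y, IsBounded (Set.range f) →
      ∃ lam : Fin N → X → Y, (∀ i, IsBounded (lam i '' Xs i)) ∧ FixPt lam f) := by
  classical
  -- the canonical address map
  set P : X → Fin N × X := fun x => (hpart x).choose with hPdef
  have hPmem : ∀ x, (P x).2 ∈ Xs (P x).1 := fun x => (hpart x).choose_spec.1.1
  have hPu : ∀ x, u (P x).1 (P x).2 = x := fun x => (hpart x).choose_spec.1.2
  have hPuniq : ∀ (i : Fin N) (y : X), y ∈ Xs i → (i, y) = P (u i y) :=
    fun i y hy => (hpart (u i y)).choose_spec.2 (i, y) ⟨hy, rfl⟩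
  obtain ⟨x0⟩ := ‹Nonempty X›
  have hs0 : (0:ℝ) ≤ s := le_trans (abs_nonneg _) (hS _ _ (hPmem x0))
  letI : TopologicalSpace X := ⊥
  refine ⟨?_, ?_, ?_, ?_⟩
  · -- existence and uniqueness
    intro lam hlam
    choose c hc using fun i => isBounded_iff_forall_norm_le.1 (hlam i)
    have hc' : ∀ i x, x ∈ Xs i → ‖lam i x‖ ≤ c i := fun i x hx => hc i _ ⟨x, hx, rfl⟩
    set C0 : ℝ := ∑ i, |c i| with hC0def
    have hC0 : ∀ i x, x ∈ Xs i → ‖lam i x‖ ≤ C0 := fun i x hx =>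
      (hc' i x hx).trans ((le_abs_self _).trans
        (Finset.single_le_sum (fun j _ => abs_nonneg (c j)) (Finset.mem_univ i)))
    set Tfun : (X →ᵇ Y) → X → Y :=
      fun f x => lam (P x).1 (P x).2 + S (P x).1 (P x).2 • f (P x).2 with hTfun
    have hTb : ∀ f : X →ᵇ Y, ∀ x, ‖Tfun f x‖ ≤ C0 + s * ‖f‖ := by
      intro f x
      calc ‖Tfun f x‖ ≤ ‖lam (P x).1 (P x).2‖ + ‖S (P x).1 (P x).2 • f (P x).2‖ :=
            norm_add_le _ _
        _ = ‖lam (P x).1 (P x).2‖ + |S (P x).1 (P x).2| * ‖f (P x).2‖ := by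
            rw [norm_smul, Real.norm_eq_abs]
        _ ≤ C0 + s * ‖f‖ := by
            refine add_le_add (hC0 _ _ (hPmem x)) ?_
            exact mul_le_mul (hS _ _ (hPmem x)) (f.norm_coe_le_norm _) (norm_nonneg _) hs0
    set T : (X →ᵇ Y) → (X →ᵇ Y) := fun f =>
      BoundedContinuousFunction.ofNormedAddCommGroup (Tfun f) continuous_bot _ (hTb f)
      with hTdef
    have hTapp : ∀ (f : X →ᵇ Y) (x : X), T f x = Tfun f x := fun f x => rfl
    have hT : LipschitzWith s.toNNReal T := by
      refine LipschitzWith.of_dist_le_mul fun f g => ?_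
      rw [Real.coe_toNNReal s hs0]
      refine (BoundedContinuousFunction.dist_le (mul_nonneg hs0 dist_nonneg)).2 fun x => ?_
      rw [hTapp, hTapp, hTfun]
      simp only
      rw [dist_add_left, dist_smul₀, Real.norm_eq_abs]
      exact mul_le_mul (hS _ _ (hPmem x))
        (BoundedContinuousFunction.dist_coe_le_dist _) dist_nonneg hs0
    have hcon : ContractingWith s.toNNReal T := ⟨Real.toNNReal_lt_one.2 hs1, hT⟩
    -- key equivalence
    have key : ∀ f : X →ᵇ Y,
        T f = f ↔ (∀ i, ∀ x ∈ Xs i, f (u i x) = lam i x + S i x • f x) := by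
      intro f
      constructor
      · intro h i x hx
        have h1 := congrArg (fun g : X →ᵇ Y => g (u i x)) h
        have h2 : (i, x) = P (u i x) := hPuniq i x hx
        simp only [hTapp] at h1
        rw [hTfun] at h1
        simp only [← h2] at h1
        exact h1.symm
      · intro h
        ext x
        rw [hTapp, hTfun]
        simp only
        rw [← h (P x).1 (P x).2 (hPmem x), hPu x]
    set F : X →ᵇ Y := ContractingWith.fixedPoint T hcon with hFdef
    have hFfix : T F = F := hcon.fixedPoint_isFixedPt
    refine ⟨⇑F, ?_, ?_⟩
    · show FixPt lam ⇑F
      rw [hFixPt]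
      exact ⟨F.isBounded_range, (key F).1 hFfix⟩
    · intro g hg
      rw [hFixPt] at hg
      obtain ⟨hgb, hge⟩ := hg
      obtain ⟨C, hC⟩ := isBounded_iff_forall_norm_le.1 hgb
      have hC' : ∀ x, ‖g x‖ ≤ C := fun x => hC _ ⟨x, rfl⟩
      set G : X →ᵇ Y :=
        BoundedContinuousFunction.ofNormedAddCommGroup g continuous_bot C hC' with hGdef
      have hGapp : ∀ x, G x = g x := fun x => rfl
      have hGfix : T G = G := by
        refine (key G).2 fun i x hx => ?_
        rw [hGapp, hGapp]
        exact hge i x hx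
      have : G = F := hcon.fixedPoint_unique hGfix
      funext x
      rw [← hGapp x, this]
  · -- linearity
    intro a b lam mu f g hf hg
    rw [hFixPt] at hf hg ⊢
    obtain ⟨hfb, hfe⟩ := hf
    obtain ⟨hgb, hge⟩ := hg
    constructor
    · obtain ⟨C1, hC1⟩ := isBounded_iff_forall_norm_le.1 hfb
      obtain ⟨C2, hC2⟩ := isBounded_iff_forall_norm_le.1 hgb
      refine isBounded_iff_forall_norm_le.2 ⟨|a| * C1 + |b| * C2, ?_⟩
      rintro _ ⟨x, rfl⟩
      calc ‖a • f x + b • g x‖ ≤ ‖a • f x‖ + ‖b • g x‖ := norm_add_le _ _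
        _ = |a| * ‖f x‖ + |b| * ‖g x‖ := by rw [norm_smul, norm_smul]; simp
        _ ≤ |a| * C1 + |b| * C2 := by
            refine add_le_add ?_ ?_
            · exact mul_le_mul_of_nonneg_left (hC1 _ ⟨x, rfl⟩) (abs_nonneg a)
            · exact mul_le_mul_of_nonneg_left (hC2 _ ⟨x, rfl⟩) (abs_nonneg b)
    · intro i x hx
      rw [hfe i x hx, hge i x hx]
      module
  · -- injectivity
    intro lam mu f hf hg i x hx
    have h1 := ((hFixPt lam f).1 hf).2 i x hx
    have h2 := ((hFixPt mu f).1 hg).2 i x hx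
    exact add_right_cancel (h1.symm.trans h2)
  · -- surjectivity
    intro f hfb
    obtain ⟨C, hC⟩ := isBounded_iff_forall_norm_le.1 hfb
    have hC' : ∀ x, ‖f x‖ ≤ C := fun x => hC _ ⟨x, rfl⟩
    refine ⟨fun i x => f (u i x) - S i x • f x, fun i => ?_, ?_⟩
    · refine isBounded_iff_forall_norm_le.2 ⟨C + s * C, ?_⟩
      rintro _ ⟨x, hx, rfl⟩
      calc ‖f (u i x) - S i x • f x‖ ≤ ‖f (u i x)‖ + ‖S i x • f x‖ := norm_sub_le _ _
        _ = ‖f (u i x)‖ + |S i x| * ‖f x‖ := by rw [norm_smul, Real.norm_eq_abs]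
        _ ≤ C + s * C := add_le_add (hC' _)
            (mul_le_mul (hS i x hx) (hC' x) (norm_nonneg _) hs0)
    · rw [hFixPt]
      exact ⟨hfb, fun i x hx => by rw [sub_add_cancel]⟩
end

section
/- Let H be a real Hilbert space, a(·,·) a symmetric bilinear form with c_1‖v‖ ≤ ‖v‖_E ≤ c_2‖v‖ where ‖v‖_E = √a(v,v), b a continuous linear functional, Ψ(u) = ½a(u,u) − b(u), and û = argmin_H Ψ. Let F(u;α) = F(u;0) + F(0;α) be affine-parameterized maps with ‖F(u;0) − F(v;0)‖ ≤ c‖u−v‖ where c c_2/c_1 < 1, let W = {F(0;α) | α ∈ ℝ^M} (a linear subspace), W(u) = F(u;0) + W, and G(u) = argmin_{w∈W(u)} Ψ(w). Then G is a contraction: ‖G(u) − G(v)‖ ≤ (c c_2/c_1)‖u−v‖. -/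
/-!
The minimiser `G u` of `Ψ(w) = a(w,w)/2 - b(w)` over the affine space `F₀ u + W` satisfies the
Euler–Lagrange equations `a(G u, w) = b(w)` for `w ∈ W`. Subtracting them for `u` and `v`,
`G u - G v` is `a`-orthogonal to `W`, while it differs from `F₀ u - F₀ v` by an element of `W`.
Pythagoras in the energy norm then gives `‖G u - G v‖_E ≤ ‖F₀ u - F₀ v‖_E`, and the norm
equivalence `c₁‖·‖ ≤ ‖·‖_E ≤ c₂‖·‖` together with the Lipschitz bound on `F₀` turns this into
`c₁‖G u - G v‖ ≤ c₂ c ‖u - v‖`.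
-/

namespace LinearMap.BilinForm

section Energy

variable {M : Type*} [AddCommGroup M] [Module ℝ M]

def ofSymm (a : M → M → ℝ) (hadd : ∀ u v w, a (u + v) w = a u w + a v w)
    (hsmul : ∀ (r : ℝ) u v, a (r • u) v = r * a u v) (hsymm : ∀ u v, a u v = a v u) :
    LinearMap.BilinForm ℝ M :=
  LinearMap.mk₂ ℝ a hadd hsmul
    (fun u v w => by rw [hsymm, hadd, hsymm v, hsymm w])
    (fun r u v => by rw [hsymm, hsmul, hsymm v, smul_eq_mul])

noncomputable def energy (B : LinearMap.BilinForm ℝ M) (f : M →ₗ[ℝ] ℝ) (x : M) : ℝ :=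
  B x x / 2 - f x

variable {B : LinearMap.BilinForm ℝ M} {f : M →ₗ[ℝ] ℝ}

theorem energy_add_smul (hB : B.IsSymm) (x w : M) (t : ℝ) :
    B.energy f (x + t • w) = B.energy f x + t * (B x w - f w) + t ^ 2 / 2 * B w w := by
  simp only [energy, map_add, map_smul, LinearMap.add_apply, LinearMap.smul_apply, smul_eq_mul,
    hB.eq w x]
  ring

theorem apply_eq_of_forall_energy_le_add_smul (hB : B.IsSymm) {x w : M}
    (h : ∀ t : ℝ, B.energy f x ≤ B.energy f (x + t • w)) : B x w = f w := by
  have hquad : ∀ t : ℝ, 0 ≤ B w w / 2 * (t * t) + (B x w - f w) * t + 0 := fun t => by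
    linarith [energy_add_smul (f := f) hB x w t ▸ h t]
  have hdisc : (B x w - f w) ^ 2 ≤ 0 := by simpa [discrim] using discrim_le_zero hquad
  exact sub_eq_zero.1 (pow_eq_zero_iff two_ne_zero |>.1 (le_antisymm hdisc (sq_nonneg _)))

theorem apply_eq_of_energy_le_on_coset (hB : B.IsSymm) {K : Submodule ℝ M} {x p : M}
    (hx : x - p ∈ K) (hmin : ∀ w ∈ K, B.energy f x ≤ B.energy f (p + w)) :
    ∀ w ∈ K, B x w = f w := fun w hw =>
  apply_eq_of_forall_energy_le_add_smul hB fun t => by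
    simpa only [← add_assoc, add_sub_cancel] using
      hmin (x - p + t • w) (K.add_mem hx (K.smul_mem t hw))

theorem apply_self_le_of_apply_sub_eq_zero (hB : B.IsPosSemidef) {d p : M}
    (horth : B d (p - d) = 0) : B d d ≤ B p p := by
  have hpyth : B p p = B d d + B (p - d) (p - d) := by
    simp only [map_sub, LinearMap.sub_apply, hB.isSymm.eq p d] at horth ⊢
    linarith
  linarith [hB.isNonneg.nonneg (p - d)]

theorem apply_sub_self_le_of_energy_le_on_coset (hB : B.IsPosSemidef) {K : Submodule ℝ M}
    {x y p q : M} (hx : x - p ∈ K) (hy : y - q ∈ K)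
    (hxmin : ∀ w ∈ K, B.energy f x ≤ B.energy f (p + w))
    (hymin : ∀ w ∈ K, B.energy f y ≤ B.energy f (q + w)) :
    B (x - y) (x - y) ≤ B (p - q) (p - q) := by
  have hxel := apply_eq_of_energy_le_on_coset hB.isSymm hx hxmin
  have hyel := apply_eq_of_energy_le_on_coset hB.isSymm hy hymin
  have hmem : p - q - (x - y) ∈ K := by
    convert K.sub_mem hy hx using 1
    abel
  apply apply_self_le_of_apply_sub_eq_zero hB
  rw [LinearMap.map_sub₂, hxel _ hmem, hyel _ hmem, sub_self]

end Energy

theorem isNonneg_of_mul_norm_le_sqrt {H : Type*} [NormedAddCommGroup H] [Module ℝ H]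
    (B : LinearMap.BilinForm ℝ H) {c₁ : ℝ} (hc₁ : 0 < c₁) (h : ∀ v, c₁ * ‖v‖ ≤ √(B v v)) :
    B.IsNonneg := by
  refine ⟨fun v => ?_⟩
  by_contra! hneg
  have hv : v = 0 := by
    have := h v
    rw [Real.sqrt_eq_zero_of_nonpos hneg.le] at this
    exact norm_le_zero_iff.1 (nonpos_of_mul_nonpos_right this hc₁)
  simp [hv] at hneg

end LinearMap.BilinForm

theorem collage_operator_contraction_general {H : Type*} [NormedAddCommGroup H]
    [InnerProductSpace ℝ H]
    (a : H → H → ℝ)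
    (haddl : ∀ u v w, a (u + v) w = a u w + a v w)
    (hsmull : ∀ (r : ℝ) u v, a (r • u) v = r * a u v)
    (hsymm : ∀ u v, a u v = a v u)
    (b : H →L[ℝ] ℝ)
    (Ψ : H → ℝ) (hΨ : ∀ u, Ψ u = a u u / 2 - b u)
    (E : H → ℝ) (hE : ∀ v, E v = Real.sqrt (a v v))
    (c₁ c₂ : ℝ) (hc₁ : 0 < c₁)
    (hlow : ∀ v, c₁ * ‖v‖ ≤ E v) (hupp : ∀ v, E v ≤ c₂ * ‖v‖)
    (F₀ : H → H) (c : ℝ)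
    (hF₀ : ∀ u v, ‖F₀ u - F₀ v‖ ≤ c * ‖u - v‖)
    (W : Submodule ℝ H)
    (G : H → H)
    (hGmem : ∀ u, ∃ w ∈ W, G u = F₀ u + w)
    (hGmin : ∀ u, ∀ w ∈ W, Ψ (G u) ≤ Ψ (F₀ u + w)) :
    ∀ u v, ‖G u - G v‖ ≤ (c * c₂ / c₁) * ‖u - v‖ := by
  intro u v
  set B := LinearMap.BilinForm.ofSymm a haddl hsmull hsymm
  have hB : B.IsPosSemidef :=
    ⟨⟨hsymm⟩, B.isNonneg_of_mul_norm_le_sqrt hc₁ fun v => hE v ▸ hlow v⟩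
  have hΨB : Ψ = B.energy b := funext hΨ
  have hcoset : ∀ u, G u - F₀ u ∈ W := fun u => by
    obtain ⟨w, hw, hGu⟩ := hGmem u
    simpa [hGu] using hw
  have henergy : B (G u - G v) (G u - G v) ≤ B (F₀ u - F₀ v) (F₀ u - F₀ v) :=
    B.apply_sub_self_le_of_energy_le_on_coset hB (hcoset u) (hcoset v)
      (hΨB ▸ hGmin u) (hΨB ▸ hGmin v)
  have hnorm : c₁ * ‖G u - G v‖ ≤ c₂ * ‖F₀ u - F₀ v‖ :=
    calc c₁ * ‖G u - G v‖ ≤ √(a (G u - G v) (G u - G v)) := hE _ ▸ hlow _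
      _ ≤ √(a (F₀ u - F₀ v) (F₀ u - F₀ v)) := Real.sqrt_le_sqrt henergy
      _ ≤ c₂ * ‖F₀ u - F₀ v‖ := hE _ ▸ hupp _
  rcases eq_or_ne u v with rfl | huv
  · simp
  have hc₂ : 0 ≤ c₂ := nonneg_of_mul_nonneg_left
    ((Real.sqrt_nonneg _).trans (hE (u - v) ▸ hupp (u - v))) (norm_pos_iff.2 (sub_ne_zero.2 huv))
  rw [div_mul_eq_mul_div, le_div_iff₀ hc₁]
  linarith [mul_le_mul_of_nonneg_left (hF₀ u v) hc₂]

/-- In the collage-fitting setting, the operator `G(u) = argmin_{w ∈ F(u;0)+W} Ψ(w)` is a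
contraction with factor `γ = c·c₂/c₁`: `‖G(u) − G(v)‖ ≤ γ‖u − v‖`. -/
theorem collage_operator_contraction {H : Type*} [NormedAddCommGroup H]
    [InnerProductSpace ℝ H] [CompleteSpace H]
    (a : H → H → ℝ)
    (haddl : ∀ u v w, a (u + v) w = a u w + a v w)
    (hsmull : ∀ (r : ℝ) u v, a (r • u) v = r * a u v)
    (hsymm : ∀ u v, a u v = a v u)
    (b : H →L[ℝ] ℝ)
    (Ψ : H → ℝ) (hΨ : ∀ u, Ψ u = a u u / 2 - b u)
    (E : H → ℝ) (hE : ∀ v, E v = Real.sqrt (a v v))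
    (c₁ c₂ : ℝ) (hc₁ : 0 < c₁)
    (hlow : ∀ v, c₁ * ‖v‖ ≤ E v) (hupp : ∀ v, E v ≤ c₂ * ‖v‖)
    (uhat : H) (huhat : ∀ v, Ψ uhat ≤ Ψ v)
    (F₀ : H → H) (c : ℝ) (hc0 : 0 ≤ c)
    (hF₀ : ∀ u v, ‖F₀ u - F₀ v‖ ≤ c * ‖u - v‖)
    (hγ : c * c₂ / c₁ < 1)
    (W : Submodule ℝ H)
    (G : H → H)
    (hGmem : ∀ u, ∃ w ∈ W, G u = F₀ u + w)
    (hGmin : ∀ u, ∀ w ∈ W, Ψ (G u) ≤ Ψ (F₀ u + w)) :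
    ∀ u v, ‖G u - G v‖ ≤ (c * c₂ / c₁) * ‖u - v‖ :=
  collage_operator_contraction_general a haddl hsmull hsymm b Ψ hΨ E hE c₁ c₂ hc₁ hlow hupp F₀ c hF₀
    W G hGmem hGmin
end

section
/- In the collage-fit setting (G contractive with factor γ = c c_2/c_1 < 1, unique fixed point ũ_N of G, and V_N = {u_α | u_α = F(u_α;α) for some α}), the collage fit ũ_N is quasi-optimal: for every u_N ∈ V_N, ‖ũ_N − û‖ ≤ ((1/c + 1)/(1/γ − 1)) ‖u_N − û‖. -/
/-- Quasi-optimality of the collage fit: if `ũ_N` is the fixed point of the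
energy-projection operator `G` (where `G(u)` minimizes the energy distance to `û` over
`W(u) = {F(u;α) | α}`), then for every `u_N ∈ V_N` (i.e. `u_N = F(u_N;α)` for some `α`),
`‖ũ_N − û‖ ≤ ((1/c + 1)/(1/γ − 1))·‖u_N − û‖` where `γ = c·c₂/c₁ < 1`. -/
theorem collage_fit_quasi_optimal {H : Type*} [NormedAddCommGroup H]
    [InnerProductSpace ℝ H] [CompleteSpace H] (Mdim : ℕ)
    (a : H → H → ℝ)
    (haddl : ∀ u v w, a (u + v) w = a u w + a v w)
    (hsmull : ∀ (r : ℝ) u v, a (r • u) v = r * a u v)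
    (hsymm : ∀ u v, a u v = a v u)
    (b : H →L[ℝ] ℝ)
    (Ψ : H → ℝ) (hΨ : ∀ u, Ψ u = a u u / 2 - b u)
    (E : H → ℝ) (hE : ∀ v, E v = Real.sqrt (a v v))
    (c₁ c₂ : ℝ) (hc₁ : 0 < c₁)
    (hlow : ∀ v, c₁ * ‖v‖ ≤ E v) (hupp : ∀ v, E v ≤ c₂ * ‖v‖)
    (uhat : H) (huhat : ∀ v, Ψ uhat ≤ Ψ v)
    (F : H → (Fin Mdim → ℝ) → H) (c : ℝ) (hc0 : 0 < c)
    (hF : ∀ (α : Fin Mdim → ℝ) (u v : H), ‖F u α - F v α‖ ≤ c * ‖u - v‖)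
    (hγ : c * c₂ / c₁ < 1)
    (G : H → H)
    (hGproj : ∀ (u : H) (α : Fin Mdim → ℝ), E (G u - uhat) ≤ E (F u α - uhat))
    (utld : H) (hfix : G utld = utld) (hmem : ∃ α, F utld α = utld) :
    ∀ (uN : H) (α : Fin Mdim → ℝ), F uN α = uN →
      ‖utld - uhat‖ ≤ ((1 / c + 1) / (1 / (c * c₂ / c₁) - 1)) * ‖uN - uhat‖ := by
  intro uN α hα
  set X := ‖utld - uhat‖ with hXdef
  set Y := ‖uN - uhat‖ with hYdef
  by_cases hcc : c₁ ≤ c₂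
  · have hc₂ : 0 < c₂ := lt_of_lt_of_le hc₁ hcc
    have hden : 0 < c₁ - c * c₂ := by
      rw [div_lt_one hc₁] at hγ; linarith
    have hX0 : 0 ≤ X := norm_nonneg _
    have hY0 : 0 ≤ Y := norm_nonneg _
    have e1 : c₁ * X ≤ E (utld - uhat) := hlow _
    have e2 : E (utld - uhat) ≤ E (F utld α - uhat) := by
      rw [show utld - uhat = G utld - uhat by rw [hfix]]
      exact hGproj utld α
    have e3 : E (F utld α - uhat) ≤ c₂ * ‖F utld α - uhat‖ := hupp _
    have e4 : ‖F utld α - uhat‖ ≤ c * ‖utld - uN‖ + Y := by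
      have hrw : F utld α - uhat = (F utld α - F uN α) + (uN - uhat) := by
        rw [hα]; abel
      rw [hrw]
      refine (norm_add_le _ _).trans ?_
      have := hF α utld uN
      simp only [hYdef]
      linarith
    have e5 : ‖utld - uN‖ ≤ X + Y := by
      have hrw : utld - uN = (utld - uhat) - (uN - uhat) := by abel
      rw [hrw]; exact norm_sub_le _ _
    have key : c₁ * X ≤ c₂ * (c * (X + Y) + Y) := by
      nlinarith [mul_le_mul_of_nonneg_left e4 hc₂.le,
        mul_le_mul_of_nonneg_left e5 (mul_pos hc0 hc₂).le]
    have hconst : (1 / c + 1) / (1 / (c * c₂ / c₁) - 1) = c₂ * (c + 1) / (c₁ - c * c₂) := by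
      have hγpos : (0:ℝ) < c * c₂ / c₁ := by positivity
      have hne : 1 / (c * c₂ / c₁) - 1 ≠ 0 := by
        have : 1 < 1 / (c * c₂ / c₁) := by
          rw [lt_div_iff₀ hγpos, one_mul]; exact hγ
        linarith
      rw [div_eq_div_iff hne hden.ne']
      field_simp
      ring
    rw [hconst, div_mul_eq_mul_div, le_div_iff₀ hden]
    nlinarith
  · have hz : ∀ v : H, ‖v‖ = 0 := by
      intro v
      by_contra hv
      have hv' : 0 < ‖v‖ := lt_of_le_of_ne (norm_nonneg v) (Ne.symm hv)
      have h1 := (hlow v).trans (hupp v)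
      exact hcc (by nlinarith)
    have hX : X = 0 := hz _
    have hY : Y = 0 := hz _
    rw [hX, hY, mul_zero]
end
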